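/- Let c ∈ ℝ, let U ⊆ ℝ² be open, and let y, z, p : U → ℝ be smooth functions such that the map f(u,v) = (u, y(u,v), z(u,v), p(u,v), v) satisfies the contact condition on U (z_u = p + v·y_u and z_v = v·y_v) and the K = c condition on U (which for this f reads c·(1 + p² + v²)²·y_v = p_u). Define Z : U → ℝ by Z(u,v) = z(u,v) − v·y(u,v). Then Z_u = p and Z_v = −y on U, and Z satisfies the Monge–Ampère equation Z_uu + c·(1 + Z_u² + v²)²·Z_vv = 0 on U. -/

import Mathlib

noncomputable section

/-- Partial derivative in the direction `(1,0)`. -/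
def pu (g : ℝ × ℝ → ℝ) (a : ℝ × ℝ) : ℝ := fderiv ℝ g a (1, 0)

/-- Partial derivative in the direction `(0,1)`. -/
def pv (g : ℝ × ℝ → ℝ) (a : ℝ × ℝ) : ℝ := fderiv ℝ g a (0, 1)

/-- A geometric solution `f(u,v) = (u, y, z, p, v)` to `K = c` gives, via the partial
Legendre transformation `Z = z - v y`, a classical solution to the Monge–Ampère
equation `Z_uu + c (1 + Z_u² + v²)² Z_vv = 0`. -/
theorem stmt7 (c : ℝ) (U : Set (ℝ × ℝ)) (hU : IsOpen U)
    (y z p : ℝ × ℝ → ℝ)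
    (hy : ContDiffOn ℝ (⊤ : ℕ∞) y U) (hz : ContDiffOn ℝ (⊤ : ℕ∞) z U)
    (hp : ContDiffOn ℝ (⊤ : ℕ∞) p U)
    (hcontact : ∀ a ∈ U, pu z a = p a + a.2 * pu y a ∧ pv z a = a.2 * pv y a)
    (hK : ∀ a ∈ U, c * (1 + (p a) ^ 2 + a.2 ^ 2) ^ 2 * pv y a = pu p a)
    (Z : ℝ × ℝ → ℝ) (hZdef : ∀ a : ℝ × ℝ, Z a = z a - a.2 * y a) :
    (∀ a ∈ U, pu Z a = p a ∧ pv Z a = - y a) ∧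
    (∀ a ∈ U, pu (pu Z) a + c * (1 + (pu Z a) ^ 2 + a.2 ^ 2) ^ 2 * pv (pv Z) a = 0) := by
  have hy' : ∀ a ∈ U, DifferentiableAt ℝ y a := fun a ha =>
    (hy.contDiffAt (hU.mem_nhds ha)).differentiableAt (by simp)
  have hz' : ∀ a ∈ U, DifferentiableAt ℝ z a := fun a ha =>
    (hz.contDiffAt (hU.mem_nhds ha)).differentiableAt (by simp)
  have hsnd : ∀ a : ℝ × ℝ, DifferentiableAt ℝ (fun a : ℝ × ℝ => a.2) a := fun a =>
    differentiable_snd.differentiableAt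
  have hZ : Z = fun a => z a - a.2 * y a := funext hZdef
  have key : ∀ a ∈ U, pu Z a = p a ∧ pv Z a = - y a := by
    intro a ha
    have hmul : DifferentiableAt ℝ (fun a : ℝ × ℝ => a.2 * y a) a :=
      (hsnd a).mul (hy' a ha)
    have hd : fderiv ℝ Z a = fderiv ℝ z a -
        (a.2 • fderiv ℝ y a + y a • fderiv ℝ (fun a : ℝ × ℝ => a.2) a) := by
      rw [hZ, fderiv_fun_sub (hz' a ha) hmul, fderiv_fun_mul (hsnd a) (hy' a ha)]
    have hsndf : fderiv ℝ (fun a : ℝ × ℝ => a.2) a = ContinuousLinearMap.snd ℝ ℝ ℝ :=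
      fderiv_snd
    have h1 := (hcontact a ha).1
    have h2 := (hcontact a ha).2
    simp only [pu, pv] at h1 h2 ⊢
    rw [hd]
    simp only [hsndf, ContinuousLinearMap.sub_apply, ContinuousLinearMap.add_apply,
      ContinuousLinearMap.smul_apply, smul_eq_mul]
    constructor
    · rw [h1]; simp
    · rw [h2]; simp
  refine ⟨key, ?_⟩
  intro a ha
  have hU1 : pu Z =ᶠ[nhds a] p := by
    filter_upwards [hU.mem_nhds ha] with b hb using (key b hb).1
  have hU2 : pv Z =ᶠ[nhds a] fun b => - y b := by
    filter_upwards [hU.mem_nhds ha] with b hb using (key b hb).2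
  have e1 : pu (pu Z) a = pu p a := by
    rw [show pu (pu Z) a = fderiv ℝ (pu Z) a (1, 0) from rfl, hU1.fderiv_eq]; rfl
  have e2 : pv (pv Z) a = - pv y a := by
    rw [show pv (pv Z) a = fderiv ℝ (pv Z) a (0, 1) from rfl, hU2.fderiv_eq, fderiv_fun_neg]
    simp [pv]
  rw [e1, e2, (key a ha).1, ← hK a ha]
  ring
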